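/- Let 𝒜 : ℝ^{m×n} → ℝ^p be a linear map with restricted isometry constant R_{2r}, and let S_l be the tangent space of the rank-r matrix manifold at a rank-r matrix X_l. Then the operator P_{S_l} − P_{S_l} 𝒜* 𝒜 P_{S_l} on ℝ^{m×n} (with the Frobenius norm) has operator norm at most R_{2r}; equivalently, for every m×n matrix Z, |‖P_{S_l}(Z)‖_F² − ‖𝒜(P_{S_l}(Z))‖_2²| ≤ R_{2r} ‖P_{S_l}(Z)‖_F², and ‖(P_{S_l} − P_{S_l} 𝒜* 𝒜 P_{S_l})(Z)‖_F ≤ R_{2r} ‖Z‖_F. -/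
import Mathlib

open Matrix BigOperators

/-- Frobenius inner product of two real matrices. -/
noncomputable def frobInner {m n : ℕ} (A B : Matrix (Fin m) (Fin n) ℝ) : ℝ :=
  ∑ i, ∑ j, A i j * B i j

/-- Frobenius norm of a real matrix. -/
noncomputable def frobNorm {m n : ℕ} (A : Matrix (Fin m) (Fin n) ℝ) : ℝ :=
  Real.sqrt (∑ i, ∑ j, (A i j) ^ 2)

/-- Euclidean inner product on `ℝ^p`. -/
noncomputable def euclInner {p : ℕ} (x y : Fin p → ℝ) : ℝ := ∑ i, x i * y i

/-- Euclidean norm on `ℝ^p`. -/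
noncomputable def euclNorm {p : ℕ} (x : Fin p → ℝ) : ℝ := Real.sqrt (∑ i, (x i) ^ 2)

/-- `R` is the restricted isometry constant of order `s` of the linear map `A`:
the smallest number `t` such that `(1-t)‖Z‖_F² ≤ ‖A Z‖₂² ≤ (1+t)‖Z‖_F²`
for all matrices `Z` of rank at most `s`. -/
def IsRIC {m n p : ℕ} (A : Matrix (Fin m) (Fin n) ℝ →ₗ[ℝ] (Fin p → ℝ)) (s : ℕ) (R : ℝ) :
    Prop :=
  IsLeast {t : ℝ | ∀ Z : Matrix (Fin m) (Fin n) ℝ, Z.rank ≤ s →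
    (1 - t) * (frobNorm Z) ^ 2 ≤ (euclNorm (A Z)) ^ 2 ∧
      (euclNorm (A Z)) ^ 2 ≤ (1 + t) * (frobNorm Z) ^ 2} R

/-- Orthogonal projection onto the tangent space of the rank-`r` manifold at
`U * Σ * Vᵀ`: `P(Z) = U Uᵀ Z + Z V Vᵀ − U Uᵀ Z V Vᵀ`. -/
noncomputable def tangentProj {m n r : ℕ} (U : Matrix (Fin m) (Fin r) ℝ)
    (V : Matrix (Fin n) (Fin r) ℝ) (Z : Matrix (Fin m) (Fin n) ℝ) :
    Matrix (Fin m) (Fin n) ℝ :=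
  U * Uᵀ * Z + Z * (V * Vᵀ) - U * Uᵀ * Z * (V * Vᵀ)

/-- Spectral (operator) norm of a real matrix. -/
noncomputable def specNorm {m n : ℕ} (A : Matrix (Fin m) (Fin n) ℝ) : ℝ :=
  sSup {c : ℝ | ∃ x : Fin n → ℝ, euclNorm x ≤ 1 ∧ c = euclNorm (A.mulVec x)}

section Aux

variable {m n p r : ℕ}

lemma frobNorm_nonneg' (A : Matrix (Fin m) (Fin n) ℝ) : 0 ≤ frobNorm A := Real.sqrt_nonneg _

lemma frobNorm_sq (A : Matrix (Fin m) (Fin n) ℝ) : frobNorm A ^ 2 = frobInner A A := by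
  rw [frobNorm, Real.sq_sqrt (by positivity)]
  simp [frobInner, sq]

lemma euclNorm_sq (x : Fin p → ℝ) : euclNorm x ^ 2 = euclInner x x := by
  rw [euclNorm, Real.sq_sqrt (by positivity)]
  simp [euclInner, sq]

lemma frobInner_comm (A B : Matrix (Fin m) (Fin n) ℝ) : frobInner A B = frobInner B A := by
  simp [frobInner, mul_comm]

lemma frobInner_add_left (A B C : Matrix (Fin m) (Fin n) ℝ) :
    frobInner (A + B) C = frobInner A C + frobInner B C := by
  simp [frobInner, add_mul, Finset.sum_add_distrib]

lemma frobInner_sub_left (A B C : Matrix (Fin m) (Fin n) ℝ) :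
    frobInner (A - B) C = frobInner A C - frobInner B C := by
  simp [frobInner, sub_mul, Finset.sum_sub_distrib]

lemma frobInner_smul_left (c : ℝ) (A B : Matrix (Fin m) (Fin n) ℝ) :
    frobInner (c • A) B = c * frobInner A B := by
  simp [frobInner, Finset.mul_sum, mul_assoc]

lemma frobInner_add_right (A B C : Matrix (Fin m) (Fin n) ℝ) :
    frobInner A (B + C) = frobInner A B + frobInner A C := by
  rw [frobInner_comm, frobInner_add_left, frobInner_comm B, frobInner_comm C]

lemma frobInner_sub_right (A B C : Matrix (Fin m) (Fin n) ℝ) :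
    frobInner A (B - C) = frobInner A B - frobInner A C := by
  rw [frobInner_comm, frobInner_sub_left, frobInner_comm B, frobInner_comm C]

lemma frobInner_smul_right (c : ℝ) (A B : Matrix (Fin m) (Fin n) ℝ) :
    frobInner A (c • B) = c * frobInner A B := by
  rw [frobInner_comm, frobInner_smul_left, frobInner_comm]

lemma euclInner_comm (x y : Fin p → ℝ) : euclInner x y = euclInner y x := by
  simp [euclInner, mul_comm]

lemma euclInner_add_left (x y z : Fin p → ℝ) :
    euclInner (x + y) z = euclInner x z + euclInner y z := by
  simp [euclInner, add_mul, Finset.sum_add_distrib]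

lemma euclInner_smul_left (c : ℝ) (x y : Fin p → ℝ) :
    euclInner (c • x) y = c * euclInner x y := by
  simp [euclInner, Finset.mul_sum, mul_assoc]

lemma euclInner_add_right (x y z : Fin p → ℝ) :
    euclInner x (y + z) = euclInner x y + euclInner x z := by
  rw [euclInner_comm, euclInner_add_left, euclInner_comm y, euclInner_comm z]

lemma euclInner_smul_right (c : ℝ) (x y : Fin p → ℝ) :
    euclInner x (c • y) = c * euclInner x y := by
  rw [euclInner_comm, euclInner_smul_left, euclInner_comm]

lemma euclNorm_zero : euclNorm (0 : Fin p → ℝ) = 0 := by simp [euclNorm]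

lemma frobNorm_zero : frobNorm (0 : Matrix (Fin m) (Fin n) ℝ) = 0 := by simp [frobNorm]

lemma frobNorm_eq_zero_iff (A : Matrix (Fin m) (Fin n) ℝ) : frobNorm A = 0 ↔ A = 0 := by
  constructor
  · intro h
    rw [frobNorm, Real.sqrt_eq_zero (by positivity)] at h
    have h2 : ∀ i ∈ Finset.univ, ∑ j, (A i j)^2 = 0 := by
      intro i _
      have := (Finset.sum_eq_zero_iff_of_nonneg (fun i _ => by positivity)).mp h
      exact this i (Finset.mem_univ i)
    ext i j
    have h3 := (Finset.sum_eq_zero_iff_of_nonneg (fun j _ => by positivity)).mp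
      (h2 i (Finset.mem_univ i)) j (Finset.mem_univ j)
    simpa using pow_eq_zero_iff (n := 2) (by norm_num) |>.mp h3
  · rintro rfl; exact frobNorm_zero

lemma frobInner_eq_trace (A B : Matrix (Fin m) (Fin n) ℝ) :
    frobInner A B = (Aᵀ * B).trace := by
  rw [frobInner, Finset.sum_comm]
  simp [Matrix.trace, Matrix.mul_apply, Matrix.diag]

lemma frobInner_mul_left (M : Matrix (Fin m) (Fin m) ℝ) (hM : Mᵀ = M)
    (Y Z : Matrix (Fin m) (Fin n) ℝ) :
    frobInner (M * Y) Z = frobInner Y (M * Z) := by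
  rw [frobInner_eq_trace, frobInner_eq_trace, Matrix.transpose_mul, hM, Matrix.mul_assoc]

lemma frobInner_mul_right (N : Matrix (Fin n) (Fin n) ℝ) (hN : Nᵀ = N)
    (Y Z : Matrix (Fin m) (Fin n) ℝ) :
    frobInner (Y * N) Z = frobInner Y (Z * N) := by
  rw [frobInner_eq_trace, frobInner_eq_trace, Matrix.transpose_mul, hN, Matrix.mul_assoc,
    Matrix.trace_mul_comm, Matrix.mul_assoc]

lemma rank_add_le' (A B : Matrix (Fin m) (Fin n) ℝ) :
    (A + B).rank ≤ A.rank + B.rank := by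
  rw [Matrix.rank, Matrix.rank, Matrix.rank, Matrix.mulVecLin_add]
  have hle : LinearMap.range (A.mulVecLin + B.mulVecLin) ≤
      LinearMap.range A.mulVecLin ⊔ LinearMap.range B.mulVecLin := by
    rintro x ⟨y, rfl⟩
    exact Submodule.mem_sup.2 ⟨A.mulVecLin y, ⟨y, rfl⟩, B.mulVecLin y, ⟨y, rfl⟩, by simp⟩
  exact le_trans (Submodule.finrank_mono hle)
    (Submodule.finrank_add_le_finrank_add_finrank _ _)

lemma rank_eq_zero_imp (A : Matrix (Fin m) (Fin n) ℝ) (h : A.rank = 0) : A = 0 := by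
  rw [Matrix.rank] at h
  have hbot : LinearMap.range A.mulVecLin = ⊥ := Submodule.finrank_eq_zero.mp h
  ext i j
  have h0 : A.mulVecLin (Pi.single j 1) = 0 := by
    have hmem : A.mulVecLin (Pi.single j 1) ∈ LinearMap.range A.mulVecLin := ⟨_, rfl⟩
    rw [hbot] at hmem; simpa using hmem
  have h2 : A *ᵥ Pi.single j 1 = 0 := h0
  have := congrFun h2 i
  simpa using this

variable (U : Matrix (Fin m) (Fin r) ℝ) (V : Matrix (Fin n) (Fin r) ℝ)

lemma tangentProj_sub (X Y : Matrix (Fin m) (Fin n) ℝ) :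
    tangentProj U V (X - Y) = tangentProj U V X - tangentProj U V Y := by
  simp only [tangentProj, Matrix.mul_sub, Matrix.sub_mul]
  abel

lemma tangentProj_smul (c : ℝ) (X : Matrix (Fin m) (Fin n) ℝ) :
    tangentProj U V (c • X) = c • tangentProj U V X := by
  simp only [tangentProj, Matrix.mul_smul, Matrix.smul_mul, smul_sub, smul_add]

lemma tangentProj_add (X Y : Matrix (Fin m) (Fin n) ℝ) :
    tangentProj U V (X + Y) = tangentProj U V X + tangentProj U V Y := by
  simp only [tangentProj, Matrix.mul_add, Matrix.add_mul]
  abel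

lemma tangentProj_idem (hU : Uᵀ * U = 1) (hV : Vᵀ * V = 1) (Z : Matrix (Fin m) (Fin n) ℝ) :
    tangentProj U V (tangentProj U V Z) = tangentProj U V Z := by
  have hU' : ∀ (k : ℕ) (X : Matrix (Fin r) (Fin k) ℝ), Uᵀ * (U * X) = X := by
    intro k X; rw [← Matrix.mul_assoc, hU, Matrix.one_mul]
  have hV' : ∀ (k : ℕ) (X : Matrix (Fin r) (Fin k) ℝ), Vᵀ * (V * X) = X := by
    intro k X; rw [← Matrix.mul_assoc, hV, Matrix.one_mul]
  simp only [tangentProj, Matrix.mul_add, Matrix.add_mul, Matrix.mul_sub, Matrix.sub_mul,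
    Matrix.mul_assoc, hU', hV', hV]
  abel

lemma tangentProj_rank_le (Z : Matrix (Fin m) (Fin n) ℝ) :
    (tangentProj U V Z).rank ≤ 2 * r := by
  have hsplit : tangentProj U V Z = U * (Uᵀ * Z) + ((Z - U * Uᵀ * Z) * V) * Vᵀ := by
    simp only [tangentProj, Matrix.sub_mul, Matrix.mul_assoc]
    abel
  rw [hsplit]
  have h1 : (U * (Uᵀ * Z)).rank ≤ r :=
    le_trans (Matrix.rank_mul_le_left _ _) (Matrix.rank_le_width U)
  have h2 : (((Z - U * Uᵀ * Z) * V) * Vᵀ).rank ≤ r :=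
    le_trans (Matrix.rank_mul_le_right _ _) (by
      simpa using Matrix.rank_le_card_height Vᵀ)
  calc (U * (Uᵀ * Z) + ((Z - U * Uᵀ * Z) * V) * Vᵀ).rank
      ≤ (U * (Uᵀ * Z)).rank + (((Z - U * Uᵀ * Z) * V) * Vᵀ).rank := rank_add_le' _ _
    _ ≤ r + r := add_le_add h1 h2
    _ = 2 * r := by ring

lemma tangentProj_selfAdj (Y Z : Matrix (Fin m) (Fin n) ℝ) :
    frobInner (tangentProj U V Y) Z = frobInner Y (tangentProj U V Z) := by
  have hUs : (U * Uᵀ)ᵀ = U * Uᵀ := by rw [Matrix.transpose_mul, Matrix.transpose_transpose]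
  have hVs : (V * Vᵀ)ᵀ = V * Vᵀ := by rw [Matrix.transpose_mul, Matrix.transpose_transpose]
  have e1 : frobInner (U * Uᵀ * Y) Z = frobInner Y (U * Uᵀ * Z) :=
    frobInner_mul_left _ hUs _ _
  have e2 : frobInner (Y * (V * Vᵀ)) Z = frobInner Y (Z * (V * Vᵀ)) :=
    frobInner_mul_right _ hVs _ _
  have e3 : frobInner (U * Uᵀ * Y * (V * Vᵀ)) Z = frobInner Y (U * Uᵀ * Z * (V * Vᵀ)) := by
    rw [frobInner_mul_right _ hVs, frobInner_mul_left _ hUs, ← Matrix.mul_assoc]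
  rw [tangentProj, frobInner_sub_left, frobInner_add_left, e1, e2, e3, tangentProj,
    frobInner_sub_right, frobInner_add_right]

lemma frobInner_combo (c d : ℝ) (X Y : Matrix (Fin m) (Fin n) ℝ) :
    frobInner (c • X + d • Y) (c • X + d • Y) =
      c ^ 2 * frobInner X X + 2 * c * d * frobInner X Y + d ^ 2 * frobInner Y Y := by
  simp only [frobInner_add_left, frobInner_add_right, frobInner_smul_left,
    frobInner_smul_right]
  rw [frobInner_comm Y X]
  ring

lemma euclInner_combo (c d : ℝ) (x y : Fin p → ℝ) :
    euclInner (c • x + d • y) (c • x + d • y) =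
      c ^ 2 * euclInner x x + 2 * c * d * euclInner x y + d ^ 2 * euclInner y y := by
  simp only [euclInner_add_left, euclInner_add_right, euclInner_smul_left,
    euclInner_smul_right]
  rw [euclInner_comm y x]
  ring

lemma frobInner_le_norm (X Y : Matrix (Fin m) (Fin n) ℝ) :
    frobInner X Y ≤ frobNorm X * frobNorm Y := by
  by_cases hX : X = 0
  · subst hX; simp [frobInner, frobNorm]
  by_cases hY : Y = 0
  · subst hY; simp [frobInner, frobNorm]
  have ha : 0 < frobNorm X :=
    lt_of_le_of_ne (frobNorm_nonneg' X) fun h => hX ((frobNorm_eq_zero_iff X).mp h.symm)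
  have hb : 0 < frobNorm Y :=
    lt_of_le_of_ne (frobNorm_nonneg' Y) fun h => hY ((frobNorm_eq_zero_iff Y).mp h.symm)
  have h0 : 0 ≤ frobInner (frobNorm Y • X + (-frobNorm X) • Y)
      (frobNorm Y • X + (-frobNorm X) • Y) := by
    rw [← frobNorm_sq]; positivity
  rw [frobInner_combo] at h0
  rw [← frobNorm_sq, ← frobNorm_sq] at h0
  nlinarith [mul_pos ha hb]

lemma tangentProj_norm_le (hU : Uᵀ * U = 1) (hV : Vᵀ * V = 1)
    (Z : Matrix (Fin m) (Fin n) ℝ) :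
    frobNorm (tangentProj U V Z) ≤ frobNorm Z := by
  have h1 : frobNorm (tangentProj U V Z) ^ 2 = frobInner Z (tangentProj U V Z) := by
    rw [frobNorm_sq]
    nth_rewrite 1 [show tangentProj U V Z = tangentProj U V Z from rfl]
    rw [tangentProj_selfAdj, tangentProj_idem U V hU hV]
  have h2 : frobInner Z (tangentProj U V Z) ≤ frobNorm Z * frobNorm (tangentProj U V Z) :=
    frobInner_le_norm _ _
  rcases eq_or_lt_of_le (frobNorm_nonneg' (tangentProj U V Z)) with h0 | h0
  · rw [← h0]; exact frobNorm_nonneg' Z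
  · nlinarith

lemma polar_bound (A : Matrix (Fin m) (Fin n) ℝ →ₗ[ℝ] (Fin p → ℝ)) (R2 : ℝ)
    (hrip : ∀ W : Matrix (Fin m) (Fin n) ℝ, W.rank ≤ 2 * r →
      (1 - R2) * (frobNorm W) ^ 2 ≤ (euclNorm (A W)) ^ 2 ∧
        (euclNorm (A W)) ^ 2 ≤ (1 + R2) * (frobNorm W) ^ 2)
    (X Y : Matrix (Fin m) (Fin n) ℝ)
    (hX : tangentProj U V X = X) (hY : tangentProj U V Y = Y) :
    |frobInner X Y - euclInner (A X) (A Y)| ≤ R2 * (frobNorm X * frobNorm Y) := by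
  by_cases hXz : X = 0
  · subst hXz
    simp [frobInner, map_zero, euclInner, frobNorm]
  by_cases hYz : Y = 0
  · subst hYz
    simp [frobInner, map_zero, euclInner, frobNorm]
  have ha : 0 < frobNorm X :=
    lt_of_le_of_ne (frobNorm_nonneg' X) fun h => hXz ((frobNorm_eq_zero_iff X).mp h.symm)
  have hb : 0 < frobNorm Y :=
    lt_of_le_of_ne (frobNorm_nonneg' Y) fun h => hYz ((frobNorm_eq_zero_iff Y).mp h.symm)
  set a := frobNorm X with hadef
  set b := frobNorm Y with hbdef
  set S := b • X + a • Y with hSdef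
  set D := b • X + (-a) • Y with hDdef
  have hSr : S.rank ≤ 2 * r := by
    have : S = tangentProj U V (b • X + a • Y) := by
      rw [tangentProj_add, tangentProj_smul, tangentProj_smul, hX, hY]
    rw [this]; exact tangentProj_rank_le U V _
  have hDr : D.rank ≤ 2 * r := by
    have : D = tangentProj U V (b • X + (-a) • Y) := by
      rw [tangentProj_add, tangentProj_smul, tangentProj_smul, hX, hY]
    rw [this]; exact tangentProj_rank_le U V _
  obtain ⟨hS1, hS2⟩ := hrip S hSr
  obtain ⟨hD1, hD2⟩ := hrip D hDr
  have hfXX : frobInner X X = a ^ 2 := (frobNorm_sq X).symm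
  have hfYY : frobInner Y Y = b ^ 2 := (frobNorm_sq Y).symm
  have hSn : frobNorm S ^ 2 = 2 * a ^ 2 * b ^ 2 + 2 * a * b * frobInner X Y := by
    rw [frobNorm_sq, hSdef, frobInner_combo, hfXX, hfYY]; ring
  have hDn : frobNorm D ^ 2 = 2 * a ^ 2 * b ^ 2 - 2 * a * b * frobInner X Y := by
    rw [frobNorm_sq, hDdef, frobInner_combo, hfXX, hfYY]; ring
  have hAS : A S = b • A X + a • A Y := by rw [hSdef, map_add, LinearMap.map_smul, LinearMap.map_smul]
  have hAD : A D = b • A X + (-a) • A Y := by rw [hDdef, map_add, LinearMap.map_smul, LinearMap.map_smul]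
  have hASn : euclNorm (A S) ^ 2 = b ^ 2 * euclInner (A X) (A X) +
      2 * b * a * euclInner (A X) (A Y) + a ^ 2 * euclInner (A Y) (A Y) := by
    rw [euclNorm_sq, hAS, euclInner_combo]
  have hADn : euclNorm (A D) ^ 2 = b ^ 2 * euclInner (A X) (A X) -
      2 * b * a * euclInner (A X) (A Y) + a ^ 2 * euclInner (A Y) (A Y) := by
    rw [euclNorm_sq, hAD, euclInner_combo]; ring
  rw [hSn, hASn] at hS1 hS2
  rw [hDn, hADn] at hD1 hD2
  rw [abs_le]
  constructor
  · nlinarith [mul_pos ha hb]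
  · nlinarith [mul_pos ha hb]

end Aux

/-- The operator `P_{S_l} − P_{S_l} 𝒜* 𝒜 P_{S_l}` has (Frobenius) operator norm
at most `R₂ᵣ`: for every `Z`, `|‖P_{S_l}(Z)‖_F² − ‖𝒜(P_{S_l}(Z))‖₂²| ≤
R₂ᵣ ‖P_{S_l}(Z)‖_F²` and `‖(P_{S_l} − P_{S_l} 𝒜* 𝒜 P_{S_l})(Z)‖_F ≤ R₂ᵣ ‖Z‖_F`. -/
theorem tangent_proj_operator_bound {m n p r : ℕ}
    (A : Matrix (Fin m) (Fin n) ℝ →ₗ[ℝ] (Fin p → ℝ))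
    (Astar : (Fin p → ℝ) →ₗ[ℝ] Matrix (Fin m) (Fin n) ℝ)
    (hAstar : ∀ (v : Fin p → ℝ) (Z : Matrix (Fin m) (Fin n) ℝ),
      euclInner (A Z) v = frobInner Z (Astar v))
    (R2 : ℝ) (hR2 : IsRIC A (2 * r) R2)
    (Xl : Matrix (Fin m) (Fin n) ℝ) (hrankXl : Xl.rank = r)
    -- reduced SVD of `X_l`, defining the tangent space `S_l`
    (Ul : Matrix (Fin m) (Fin r) ℝ) (Vl : Matrix (Fin n) (Fin r) ℝ)
    (Sl : Matrix (Fin r) (Fin r) ℝ)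
    (hUl : Ulᵀ * Ul = 1) (hVl : Vlᵀ * Vl = 1)
    (hSl : Sl.IsDiag ∧ ∀ i, 0 < Sl i i) (hXlsvd : Xl = Ul * Sl * Vlᵀ) :
    ∀ Z : Matrix (Fin m) (Fin n) ℝ,
      |(frobNorm (tangentProj Ul Vl Z)) ^ 2 -
          (euclNorm (A (tangentProj Ul Vl Z))) ^ 2| ≤
        R2 * (frobNorm (tangentProj Ul Vl Z)) ^ 2 ∧
      frobNorm (tangentProj Ul Vl Z -
          tangentProj Ul Vl (Astar (A (tangentProj Ul Vl Z)))) ≤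
        R2 * frobNorm Z := by
  intro Z
  have hrip : ∀ W : Matrix (Fin m) (Fin n) ℝ, W.rank ≤ 2 * r →
      (1 - R2) * (frobNorm W) ^ 2 ≤ (euclNorm (A W)) ^ 2 ∧
        (euclNorm (A W)) ^ 2 ≤ (1 + R2) * (frobNorm W) ^ 2 := hR2.1
  have hR2nn : 0 ≤ R2 := by
    rcases Nat.eq_zero_or_pos r with hr | hr
    · exfalso
      have hmem : (R2 - 1) ∈ {t : ℝ | ∀ W : Matrix (Fin m) (Fin n) ℝ, W.rank ≤ 2 * r →
          (1 - t) * (frobNorm W) ^ 2 ≤ (euclNorm (A W)) ^ 2 ∧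
            (euclNorm (A W)) ^ 2 ≤ (1 + t) * (frobNorm W) ^ 2} := by
        intro W hW
        have hW0 : W = 0 := rank_eq_zero_imp W (by omega)
        subst hW0
        rw [map_zero, frobNorm_zero, euclNorm_zero]
        norm_num
      have := hR2.2 hmem
      linarith
    · have hXlne : Xl ≠ 0 := by
        intro h
        rw [h, Matrix.rank_zero] at hrankXl
        omega
      have hN : 0 < frobNorm Xl :=
        lt_of_le_of_ne (frobNorm_nonneg' Xl) fun h => hXlne ((frobNorm_eq_zero_iff Xl).mp h.symm)
      obtain ⟨h1, h2⟩ := hrip Xl (by rw [hrankXl]; omega)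
      nlinarith [sq_nonneg (euclNorm (A Xl)), pow_pos hN 2]
  constructor
  · obtain ⟨h1, h2⟩ := hrip (tangentProj Ul Vl Z) (tangentProj_rank_le Ul Vl Z)
    rw [abs_le]
    constructor <;> nlinarith
  · set PZ := tangentProj Ul Vl Z with hPZdef
    set W := PZ - tangentProj Ul Vl (Astar (A PZ)) with hWdef
    have hPZfix : tangentProj Ul Vl PZ = PZ := tangentProj_idem Ul Vl hUl hVl Z
    have hWfix : tangentProj Ul Vl W = W := by
      rw [hWdef, tangentProj_sub]
      congr 1
      exact tangentProj_idem Ul Vl hUl hVl _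
    have hkey : frobNorm W ^ 2 = frobInner W PZ - euclInner (A W) (A PZ) := by
      rw [frobNorm_sq]
      nth_rewrite 2 [hWdef]
      rw [frobInner_sub_right]
      congr 1
      rw [← tangentProj_selfAdj Ul Vl W, hWfix, ← hAstar]
    have hpol := polar_bound Ul Vl A R2 hrip W PZ hWfix hPZfix
    have h1 : frobNorm W ^ 2 ≤ R2 * (frobNorm W * frobNorm PZ) := by
      rw [hkey]
      exact le_trans (le_abs_self _) hpol
    have h2 : frobNorm PZ ≤ frobNorm Z := tangentProj_norm_le Ul Vl hUl hVl Z
    rcases eq_or_lt_of_le (frobNorm_nonneg' W) with h0 | h0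
    · rw [← h0]
      exact mul_nonneg hR2nn (frobNorm_nonneg' Z)
    · have h3 : frobNorm W ≤ R2 * frobNorm PZ := by nlinarith
      exact le_trans h3 (mul_le_mul_of_nonneg_left h2 hR2nn)
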